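/- arXiv:2108.00531 — 3 statements merged into one kernel-verified Lean document; each statement's English description precedes it below -/
import Mathlib

section
/- Every componentwise polymatroidal monomial ideal in K[x,y] has linear quotients. Explicitly, if the minimal generators u_0,...,u_m are ordered with strictly decreasing x-degree and j is the index where the degree sequence attains its minimum (as in the valley unimodality), then the ordering u_j, u_{j+1}, ..., u_m, u_{j-1}, u_{j-2}, ..., u_0 is an admissible order. -/
/-- A monomial in `K[x_1,...,x_n]` is identified with its exponent vector. -/
abbrev Mon (n : ℕ) := Fin n → ℕ

/-- Total degree of a monomial. -/
def degree {n : ℕ} (u : Mon n) : ℕ := ∑ i, u i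

/-- A monomial ideal is identified with the set of exponent vectors of the monomials it
contains; this set is closed under multiplication by monomials. -/
def IsMonomialIdeal {n : ℕ} (I : Set (Mon n)) : Prop :=
  ∀ u ∈ I, ∀ w : Mon n, u + w ∈ I

/-- The minimal monomial generating set `G(I)` of a monomial ideal: monomials of `I`
minimal with respect to divisibility (pointwise `≤` of exponent vectors). -/
def minGens {n : ℕ} (I : Set (Mon n)) : Set (Mon n) :=
  {u | u ∈ I ∧ ∀ v ∈ I, v ≤ u → v = u}

/-- `exch v i j` is the exponent vector of `x_j * (v / x_i)` (for `i ≠ j`). -/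
def exch {n : ℕ} (v : Mon n) (i j : Fin n) : Mon n :=
  fun k => if k = i then v k - 1 else if k = j then v k + 1 else v k

/-- `component I d` is the ideal `I_⟨d⟩` generated by the degree-`d` monomials of `I`. -/
def component {n : ℕ} (I : Set (Mon n)) (d : ℕ) : Set (Mon n) :=
  {w | ∃ u ∈ I, degree u = d ∧ u ≤ w}

/-- `I` is generated in a single degree. -/
def GeneratedInSingleDegree {n : ℕ} (I : Set (Mon n)) : Prop :=
  ∃ d, ∀ u ∈ minGens I, degree u = d

/-- A polymatroidal ideal: generated in a single degree and its generators satisfy the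
exchange property. -/
def IsPolymatroidal {n : ℕ} (I : Set (Mon n)) : Prop :=
  GeneratedInSingleDegree I ∧
  ∀ u ∈ minGens I, ∀ v ∈ minGens I, ∀ i : Fin n, v i < u i →
    ∃ j : Fin n, u j < v j ∧ exch u i j ∈ I

/-- Componentwise polymatroidal: each graded component ideal `I_⟨d⟩` is polymatroidal. -/
def ComponentwisePolymatroidal {n : ℕ} (I : Set (Mon n)) : Prop :=
  ∀ d : ℕ, IsPolymatroidal (component I d)

/-- Non-pure dual exchange property: for `u, v ∈ G(I)` with `deg u ≤ deg v` and
`deg_{x_i} v < deg_{x_i} u` there is `j` with `deg_{x_j} v > deg_{x_j} u` and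
`x_i * (v / x_j) ∈ I`. -/
def NonPureDualExchange {n : ℕ} (I : Set (Mon n)) : Prop :=
  ∀ u ∈ minGens I, ∀ v ∈ minGens I, degree u ≤ degree v →
    ∀ i : Fin n, v i < u i → ∃ j : Fin n, u j < v j ∧ exch v j i ∈ I

/-- Non-pure exchange property: for `u, v ∈ G(I)` with `deg u ≤ deg v` and
`deg_{x_i} v > deg_{x_i} u` there is `j` with `deg_{x_j} v < deg_{x_j} u` and
`x_j * (v / x_i) ∈ I`. -/
def NonPureExchange {n : ℕ} (I : Set (Mon n)) : Prop :=
  ∀ u ∈ minGens I, ∀ v ∈ minGens I, degree u ≤ degree v →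
    ∀ i : Fin n, u i < v i → ∃ j : Fin n, v j < u j ∧ exch v i j ∈ I

/-- The monomial ideal generated by a set `G` of monomials. -/
def genBy {n : ℕ} (G : Set (Mon n)) : Set (Mon n) := {w | ∃ u ∈ G, u ≤ w}

/-- The product of two monomial ideals (as sets of monomials). -/
def mulIdeal {n : ℕ} (I J : Set (Mon n)) : Set (Mon n) :=
  {w | ∃ u ∈ I, ∃ v ∈ J, w = u + v}

/-- The product of a monomial ideal with the monomial `u`. -/
def mulMon {n : ℕ} (u : Mon n) (I : Set (Mon n)) : Set (Mon n) :=
  (fun v => u + v) '' I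

/-- Strong exchange property: for all generators `u, v` and all `i, j` with
`deg_{x_i} u > deg_{x_i} v` and `deg_{x_j} u < deg_{x_j} v`, `x_j * (u / x_i) ∈ I`. -/
def StrongExchange {n : ℕ} (I : Set (Mon n)) : Prop :=
  ∀ u ∈ minGens I, ∀ v ∈ minGens I, ∀ i j : Fin n,
    v i < u i → u j < v j → exch u i j ∈ I

/-- The Veronese type ideal `I_{(d; a_1,...,a_n)}`: generated by all monomials of
degree `d` with `deg_{x_i} ≤ a i` for all `i`. -/
def veronese (n d : ℕ) (a : Fin n → ℕ) : Set (Mon n) :=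
  {w | ∃ u : Mon n, degree u = d ∧ (∀ i, u i ≤ a i) ∧ u ≤ w}

/-- A list of monomials is an admissible order if each colon ideal
`(u_1,...,u_{i-1}) : u_i` is generated by a subset `S` of the variables. -/
def AdmissibleOrder {n : ℕ} (L : List (Mon n)) : Prop :=
  ∀ i : Fin L.length, ∃ S : Set (Fin n),
    ∀ w : Mon n, (w + L.get i ∈ genBy {u | u ∈ L.take i.1}) ↔ ∃ k ∈ S, 1 ≤ w k

/-- `I` has linear quotients: some ordering of `G(I)` is admissible. -/
def HasLinearQuotients {n : ℕ} (I : Set (Mon n)) : Prop :=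
  ∃ L : List (Mon n), L.Nodup ∧ (∀ u, u ∈ L ↔ u ∈ minGens I) ∧ AdmissibleOrder L

/-- `I` can be extended by linear quotients to `J`: `G(I) ⊆ G(J)` and the elements of
`G(J) \ G(I)` can be ordered `v_1,...,v_m` such that each colon ideal
`(G(I), v_1,...,v_i) : v_{i+1}` is generated by a subset of the variables. -/
def ExtendsByLinearQuotients {n : ℕ} (I J : Set (Mon n)) : Prop :=
  I ⊆ J ∧ minGens I ⊆ minGens J ∧
  ∃ L : List (Mon n), L.Nodup ∧ (∀ u, u ∈ L ↔ u ∈ minGens J ∧ u ∉ minGens I) ∧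
    ∀ i : Fin L.length, ∃ S : Set (Fin n),
      ∀ w : Mon n,
        (w + L.get i ∈ genBy (minGens I ∪ {u | u ∈ L.take i.1})) ↔ ∃ k ∈ S, 1 ≤ w k

/-- The minimal generators of `I ⊆ K[x,y]` are `u_i = x^{a i} y^{b i}`, `i = 0,...,m`,
with `a` strictly decreasing, `b` strictly increasing, `a m = 0` and `b 0 = 0`
(so `I` is `(x,y)`-primary). -/
def yxTightGens (m : ℕ) (a b : ℕ → ℕ) (I : Set (Mon 2)) : Prop :=
  (∀ i k : ℕ, i ≤ m → k ≤ m → i < k → a k < a i ∧ b i < b k) ∧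
  a m = 0 ∧ b 0 = 0 ∧
  minGens I = {u | ∃ i ≤ m, u = ![a i, b i]}

/-- `I` is `x`-tight in `[0, r]`: the `x`-exponents of the generators are exactly
`r, r-1, ..., 1, 0` (i.e. `a (r - i) = i`). -/
def xTight (I : Set (Mon 2)) (r : ℕ) : Prop :=
  ∃ b : ℕ → ℕ, yxTightGens r (fun i => r - i) b I

/-- `I` is `y`-tight in `[0, s]`: the `y`-exponents of the generators are exactly
`0, 1, ..., s`. -/
def yTight (I : Set (Mon 2)) (s : ℕ) : Prop :=
  ∃ a : ℕ → ℕ, yxTightGens s a (fun i => i) I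

/-- `I` is `yx`-tight: there is `0 ≤ j ≤ m` with `b i = i` for `i = 0,...,j` and
`a (m - i) = i` for `i = 0,...,m-j`. -/
def yxTight (I : Set (Mon 2)) : Prop :=
  ∃ (m : ℕ) (a b : ℕ → ℕ), yxTightGens m a b I ∧
    ∃ j ≤ m, (∀ i ≤ j, b i = i) ∧ ∀ i ≤ m - j, a (m - i) = i

/-- Powers of a monomial ideal. -/
def powIdeal {n : ℕ} (I : Set (Mon n)) : ℕ → Set (Mon n)
  | 0 => Set.univ
  | k + 1 => mulIdeal (powIdeal I k) I

-- basic lemmas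
lemma mon_le_def {n : ℕ} {u v : Mon n} : u ≤ v ↔ ∀ i, u i ≤ v i := Pi.le_def

lemma degree_mono {n : ℕ} {u v : Mon n} (h : u ≤ v) : degree u ≤ degree v :=
  Finset.sum_le_sum fun i _ => h i

lemma eq_of_le_of_degree_le {n : ℕ} {u v : Mon n} (h : u ≤ v)
    (hd : degree v ≤ degree u) : u = v := by
  by_contra hne
  have : ∃ i, u i < v i := by
    by_contra hc
    push_neg at hc
    exact hne (le_antisymm h fun i => hc i)
  obtain ⟨i, hi⟩ := this
  have : degree u < degree v :=
    Finset.sum_lt_sum (fun k _ => h k) ⟨i, Finset.mem_univ i, hi⟩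
  omega

lemma exists_minGen_le {n : ℕ} {I : Set (Mon n)} :
    ∀ w ∈ I, ∃ g ∈ minGens I, g ≤ w := by
  have H : ∀ d : ℕ, ∀ w ∈ I, degree w ≤ d → ∃ g ∈ minGens I, g ≤ w := by
    intro d
    induction d with
    | zero =>
      intro w hw hd
      refine ⟨w, ⟨hw, fun v hv hvw => eq_of_le_of_degree_le hvw ?_⟩, le_refl w⟩
      omega
    | succ d ih =>
      intro w hw hd
      by_cases hmin : ∀ v ∈ I, v ≤ w → v = w
      · exact ⟨w, ⟨hw, hmin⟩, le_refl w⟩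
      · push_neg at hmin
        obtain ⟨v, hv, hvw, hne⟩ := hmin
        have hlt : degree v < degree w := by
          rcases lt_or_ge (degree v) (degree w) with h | h
          · exact h
          · exact absurd (eq_of_le_of_degree_le hvw h) hne
        obtain ⟨g, hg, hgle⟩ := ih v hv (by omega)
        exact ⟨g, hg, le_trans hgle hvw⟩
  exact fun w hw => H (degree w) w hw le_rfl

lemma minGens_component {n : ℕ} {I : Set (Mon n)} {d : ℕ} :
    minGens (component I d) = {w | w ∈ I ∧ degree w = d} := by
  ext w
  constructor
  · rintro ⟨⟨u, hu, hud, huw⟩, hmin⟩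
    have : u ∈ component I d := ⟨u, hu, hud, le_refl u⟩
    have := hmin u this huw
    subst this
    exact ⟨hu, hud⟩
  · rintro ⟨hw, hd⟩
    refine ⟨⟨w, hw, hd, le_refl w⟩, ?_⟩
    rintro v ⟨u, hu, hud, huv⟩ hvw
    have h1 : d ≤ degree v := hud ▸ degree_mono huv
    exact (eq_of_le_of_degree_le hvw (hd ▸ h1)).symm ▸ rfl

lemma degree_two (u : Mon 2) : degree u = u 0 + u 1 := by
  simp [degree, Fin.sum_univ_two]

lemma exch_step {I : Set (Mon 2)} (hcp : ComponentwisePolymatroidal I)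
    {d : ℕ} {w w' : Mon 2} (hw : w ∈ I) (hwd : degree w = d)
    (hw' : w' ∈ I) (hw'd : degree w' = d) (hlt : w' 0 < w 0) :
    ∃ z ∈ I, degree z = d ∧ z 0 = w 0 - 1 := by
  have hwm : w ∈ minGens (component I d) := by
    rw [minGens_component]; exact ⟨hw, hwd⟩
  have hw'm : w' ∈ minGens (component I d) := by
    rw [minGens_component]; exact ⟨hw', hw'd⟩
  obtain ⟨j, hj1, hj2⟩ := (hcp d).2 w hwm w' hw'm 0 hlt
  have hj : j = 1 := by
    have h2 := j.isLt
    have h0 : j.val ≠ 0 := by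
      intro h
      have : j = 0 := Fin.ext h
      subst this
      omega
    exact Fin.ext (by omega)
  subst hj
  have hdz : degree (exch w 0 1) = d := by
    rw [degree_two] at hwd ⊢
    simp only [exch]
    norm_num
    omega
  refine ⟨exch w 0 1, ?_, hdz, by simp [exch]⟩
  obtain ⟨g, hg, hgd, hgz⟩ := hj2
  have := eq_of_le_of_degree_le hgz (by rw [hdz, hgd])
  rwa [← this]

lemma interval_aux {I : Set (Mon 2)} (hcp : ComponentwisePolymatroidal I) :
    ∀ (N : ℕ) {d : ℕ} (w : Mon 2), w ∈ I → degree w = d →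
    ∀ w', w' ∈ I → degree w' = d →
    ∀ c, w' 0 ≤ c → c ≤ w 0 → w 0 - c = N →
    ∃ z ∈ I, degree z = d ∧ z 0 = c := by
  intro N
  induction N with
  | zero =>
    intro d w hw hwd w' hw' hw'd c h1 h2 h3
    exact ⟨w, hw, hwd, by omega⟩
  | succ N ih =>
    intro d w hw hwd w' hw' hw'd c h1 h2 h3
    obtain ⟨z, hz, hzd, hz0⟩ := exch_step hcp hw hwd hw' hw'd (by omega)
    exact ih z hz hzd w' hw' hw'd c h1 (by omega) (by omega)

lemma interval {I : Set (Mon 2)} (hcp : ComponentwisePolymatroidal I)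
    {d : ℕ} {w w' : Mon 2} (hw : w ∈ I) (hwd : degree w = d)
    (hw' : w' ∈ I) (hw'd : degree w' = d) {c : ℕ} (h1 : w' 0 ≤ c) (h2 : c ≤ w 0) :
    ∃ z ∈ I, degree z = d ∧ z 0 = c :=
  interval_aux hcp (w 0 - c) w hw hwd w' hw' hw'd c h1 h2 rfl

lemma vec_le_iff {x y : ℕ} {w : Mon 2} : (![x, y] : Mon 2) ≤ w ↔ x ≤ w 0 ∧ y ≤ w 1 := by
  rw [mon_le_def, Fin.forall_fin_two]
  simp

lemma le_vec_iff {x y : ℕ} {w : Mon 2} : w ≤ (![x, y] : Mon 2) ↔ w 0 ≤ x ∧ w 1 ≤ y := by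
  rw [mon_le_def, Fin.forall_fin_two]
  simp

lemma degree_vec (x y : ℕ) : degree (![x, y] : Mon 2) = x + y := by
  rw [degree_two]; simp

section Gaps

variable {I : Set (Mon 2)} (hI : IsMonomialIdeal I) (hcp : ComponentwisePolymatroidal I)
  {m : ℕ} {a b : ℕ → ℕ}
  (hab : ∀ i k : ℕ, i ≤ m → k ≤ m → i < k → a k < a i ∧ b i < b k)
  (hmg : minGens I = {u | ∃ i ≤ m, u = ![a i, b i]})

include hmg in
lemma gen_mem_minGens : ∀ i ≤ m, (![a i, b i] : Mon 2) ∈ minGens I := by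
  intro i hi
  rw [hmg]
  exact ⟨i, hi, rfl⟩

include hmg in
lemma gen_mem : ∀ i ≤ m, (![a i, b i] : Mon 2) ∈ I :=
  fun i hi => (gen_mem_minGens hmg i hi).1

include hI hmg in
lemma gen_shift_mem : ∀ i ≤ m, ∀ p q : ℕ, (![a i + p, b i + q] : Mon 2) ∈ I := by
  intro i hi p q
  have h := hI _ (gen_mem hmg i hi) ![p, q]
  have he : (![a i, b i] : Mon 2) + ![p, q] = ![a i + p, b i + q] := by
    funext k
    fin_cases k <;> simp
  rwa [he] at h

include hmg in
lemma divisor_index : ∀ w ∈ I, ∃ k ≤ m, a k ≤ w 0 ∧ b k ≤ w 1 := by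
  intro w hw
  obtain ⟨g, hg, hgw⟩ := exists_minGen_le w hw
  rw [hmg] at hg
  obtain ⟨k, hk, rfl⟩ := hg
  rw [vec_le_iff] at hgw
  exact ⟨k, hk, hgw⟩

include hI hcp hab hmg in
lemma gapA : ∀ i : ℕ, i < m → a i + b i ≤ a (i+1) + b (i+1) → a i = a (i+1) + 1 := by
  intro i him hd
  have hmono := hab i (i+1) (by omega) (by omega) (by omega)
  by_contra hne
  have h2 : a (i+1) + 2 ≤ a i := by omega
  set d := a (i+1) + b (i+1) with hdd
  have hw : (![a i, b i + (d - (a i + b i))] : Mon 2) ∈ I := by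
    have := gen_shift_mem hI hmg i (by omega) 0 (d - (a i + b i))
    simpa using this
  have hwd : degree (![a i, b i + (d - (a i + b i))] : Mon 2) = d := by
    rw [degree_vec]; omega
  have hw' : (![a (i+1), b (i+1)] : Mon 2) ∈ I := gen_mem hmg (i+1) (by omega)
  have hw'd : degree (![a (i+1), b (i+1)] : Mon 2) = d := by rw [degree_vec]
  obtain ⟨z, hz, hzd, hz0⟩ := interval hcp hw hwd hw' hw'd
    (c := a (i+1) + 1) (by simp) (by simp; omega)
  have hz1 : z 1 = b (i+1) - 1 := by
    rw [degree_two] at hzd; omega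
  obtain ⟨k, hk, hk0, hk1⟩ := divisor_index hmg z hz
  have hbk : k ≤ i := by
    by_contra hki
    rcases Nat.lt_or_ge (i+1) k with h | h
    · have := hab (i+1) k (by omega) hk (by omega)
      omega
    · have : k = i + 1 := by omega
      subst this
      omega
  have hak : a i ≤ a k := by
    rcases Nat.lt_or_ge k i with h | h
    · exact le_of_lt (hab k i (by omega) (by omega) h).1
    · have : k = i := by omega
      subst this; exact le_refl _
  omega

include hI hcp hab hmg in
lemma gapB : ∀ i : ℕ, i < m → a (i+1) + b (i+1) ≤ a i + b i → b (i+1) = b i + 1 := by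
  intro i him hd
  have hmono := hab i (i+1) (by omega) (by omega) (by omega)
  by_contra hne
  have h2 : b i + 2 ≤ b (i+1) := by omega
  set d := a i + b i with hdd
  have hw : (![a i, b i] : Mon 2) ∈ I := gen_mem hmg i (by omega)
  have hwd : degree (![a i, b i] : Mon 2) = d := by rw [degree_vec]
  have hw' : (![a (i+1) + (d - (a (i+1) + b (i+1))), b (i+1)] : Mon 2) ∈ I := by
    have := gen_shift_mem hI hmg (i+1) (by omega) (d - (a (i+1) + b (i+1))) 0
    simpa using this
  have hw'd : degree (![a (i+1) + (d - (a (i+1) + b (i+1))), b (i+1)] : Mon 2) = d := by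
    rw [degree_vec]; omega
  obtain ⟨z, hz, hzd, hz0⟩ := interval hcp hw hwd hw' hw'd
    (c := a i - 1) (by simp; omega) (by simp)
  have hz1 : z 1 = b i + 1 := by
    rw [degree_two] at hzd; omega
  obtain ⟨k, hk, hk0, hk1⟩ := divisor_index hmg z hz
  have hbk : i + 1 ≤ k := by
    by_contra hki
    rcases Nat.lt_or_ge k i with h | h
    · have := hab k i (by omega) (by omega) h
      omega
    · have : k = i := by omega
      subst this
      omega
  have hak : b (i+1) ≤ b k := by
    rcases Nat.lt_or_ge (i+1) k with h | h
    · exact le_of_lt (hab (i+1) k (by omega) hk h).2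
    · have : k = i + 1 := by omega
      subst this; exact le_refl _
  omega

end Gaps

section Gaps2

variable {I : Set (Mon 2)} (hI : IsMonomialIdeal I) (hcp : ComponentwisePolymatroidal I)
  {m : ℕ} {a b : ℕ → ℕ}
  (hab : ∀ i k : ℕ, i ≤ m → k ≤ m → i < k → a k < a i ∧ b i < b k)
  (hmg : minGens I = {u | ∃ i ≤ m, u = ![a i, b i]})

include hI hcp hab hmg in
lemma no_peak : ∀ i k : ℕ, i < k → k < m →
    a i + b i < a (i+1) + b (i+1) →
    (∀ p, i < p → p < k → a p + b p = a (p+1) + b (p+1)) →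
    a (k+1) + b (k+1) < a k + b k → False := by
  intro i k hik hkm hasc hplat hdesc
  set D := a (i+1) + b (i+1) with hD
  have hplateau : ∀ p, i + 1 ≤ p → p ≤ k → a p + b p = D := by
    intro p h1
    induction p, h1 using Nat.le_induction with
    | base => intro _; rfl
    | succ p hp ih =>
      intro h2
      have := hplat p (by omega) (by omega)
      rw [← this]
      exact ih (by omega)
  have hDk : a k + b k = D := hplateau k (by omega) (le_refl k)
  have haA : a i = a (i+1) + 1 := gapA hI hcp hab hmg i (by omega) (by omega)
  have hm1 := hab i (i+1) (by omega) (by omega) (by omega)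
  have hm2 := hab (i+1) (k+1) (by omega) (by omega) (by omega)
  have hw : (![a i, b i + ((D-1) - (a i + b i))] : Mon 2) ∈ I := by
    have := gen_shift_mem hI hmg i (by omega) 0 ((D-1) - (a i + b i))
    simpa using this
  have hwd : degree (![a i, b i + ((D-1) - (a i + b i))] : Mon 2) = D - 1 := by
    rw [degree_vec]; omega
  have hw' : (![a (k+1), b (k+1) + ((D-1) - (a (k+1) + b (k+1)))] : Mon 2) ∈ I := by
    have := gen_shift_mem hI hmg (k+1) (by omega) 0 ((D-1) - (a (k+1) + b (k+1)))
    simpa using this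
  have hw'd : degree (![a (k+1), b (k+1) + ((D-1) - (a (k+1) + b (k+1)))] : Mon 2) = D - 1 := by
    rw [degree_vec]; omega
  obtain ⟨z, hz, hzd, hz0⟩ := interval hcp hw hwd hw' hw'd
    (c := a i - 1) (by simp; omega) (by simp)
  have hz1 : z 1 = b (i+1) - 1 := by
    rw [degree_two] at hzd; omega
  obtain ⟨k', hk', hk'0, hk'1⟩ := divisor_index hmg z hz
  have hik' : i + 1 ≤ k' := by
    by_contra hc
    rcases Nat.lt_or_ge k' i with h | h
    · have := hab k' i (by omega) (by omega) h
      omega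
    · have : k' = i := by omega
      subst this
      omega
  have : b (i+1) ≤ b k' := by
    rcases Nat.lt_or_ge (i+1) k' with h | h
    · exact le_of_lt (hab (i+1) k' (by omega) hk' h).2
    · have : k' = i + 1 := by omega
      subst this; exact le_refl _
  omega

end Gaps2

lemma vec_le_add_iff {x' y' x y : ℕ} {w : Mon 2} :
    (![x', y'] : Mon 2) ≤ w + ![x, y] ↔ x' ≤ w 0 + x ∧ y' ≤ w 1 + y := by
  rw [vec_le_iff]
  simp

section Main

variable {I : Set (Mon 2)} (hI : IsMonomialIdeal I) (hcp : ComponentwisePolymatroidal I)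
  {m : ℕ} {a b : ℕ → ℕ}
  (hab : ∀ i k : ℕ, i ≤ m → k ≤ m → i < k → a k < a i ∧ b i < b k)
  (hmg : minGens I = {u | ∃ i ≤ m, u = ![a i, b i]})

include hI hcp hab hmg in
lemma admissible_main {j : ℕ} (hj : j ≤ m)
    (h1 : ∀ i : ℕ, i < j → a (i+1) + b (i+1) ≤ a i + b i)
    (h2 : ∀ i : ℕ, j ≤ i → i < m → a i + b i ≤ a (i+1) + b (i+1)) :
    AdmissibleOrder
      (((List.range (m + 1 - j)).map fun i => ![a (j + i), b (j + i)]) ++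
       ((List.range j).map fun i => ![a (j - 1 - i), b (j - 1 - i)])) := by
  set E : ℕ → Mon 2 := fun t =>
    if t < m + 1 - j then ![a (j + t), b (j + t)]
    else ![a (j - 1 - (t - (m + 1 - j))), b (j - 1 - (t - (m + 1 - j)))] with hE
  have hEpos : ∀ t, t < m + 1 - j → E t = ![a (j + t), b (j + t)] := by
    intro t ht
    rw [hE]
    simp [ht]
  have hEneg : ∀ t, ¬ t < m + 1 - j →
      E t = ![a (j - 1 - (t - (m + 1 - j))), b (j - 1 - (t - (m + 1 - j)))] := by
    intro t ht
    rw [hE]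
    simp [ht]
  set L : List (Mon 2) :=
    ((List.range (m + 1 - j)).map fun i => ![a (j + i), b (j + i)]) ++
     ((List.range j).map fun i => ![a (j - 1 - i), b (j - 1 - i)]) with hL
  have hlen : L.length = m + 1 := by
    rw [hL]
    simp
    omega
  have hget : ∀ (t : ℕ) (ht : t < L.length), L[t] = E t := by
    intro t ht
    by_cases h : t < m + 1 - j
    · rw [List.getElem_of_eq hL, List.getElem_append_left (by simpa using h)]
      rw [hEpos t h]
      simp
    · rw [List.getElem_of_eq hL, List.getElem_append_right (by simpa using h)]
      rw [hEneg t h]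
      simp
  have hmemtake : ∀ (p : ℕ) (u : Mon 2), p ≤ L.length →
      (u ∈ L.take p ↔ ∃ t, t < p ∧ u = E t) := by
    intro p u hp
    rw [List.mem_iff_getElem]
    constructor
    · rintro ⟨t, ht, rfl⟩
      have ht2 : t < p := by
        have := List.length_take (i := p) (l := L)
        omega
      have ht3 : t < L.length := by omega
      exact ⟨t, ht2, by rw [List.getElem_take, hget t ht3]⟩
    · rintro ⟨t, ht, rfl⟩
      have ht3 : t < L.length := by omega
      have htl : t < (L.take p).length := by
        have := List.length_take (i := p) (l := L)
        omega
      exact ⟨t, htl, by rw [List.getElem_take, hget t ht3]⟩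
  intro pf
  set p := pf.1 with hp
  have hpm : p < m + 1 := by
    have := pf.isLt
    omega
  have hgetp : L.get pf = E p := by
    rw [List.get_eq_getElem, hget p pf.isLt]
  rcases Nat.eq_zero_or_pos p with hp0 | hppos
  · -- first element: colon ideal is zero
    refine ⟨∅, fun w => ?_⟩
    constructor
    · rintro ⟨v, hv, hvle⟩
      rw [hp0] at hv
      simp at hv
    · rintro ⟨k, hk, -⟩
      exact absurd hk (Set.notMem_empty k)
  rcases Nat.lt_or_ge p (m + 1 - j) with hblk | hblk
  · -- first block, position p ≥ 1 : colon is (x)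
    have hEp : E p = ![a (j + p), b (j + p)] := hEpos p hblk
    refine ⟨{0}, fun w => ?_⟩
    simp only [Set.mem_singleton_iff, exists_eq_left]
    constructor
    · rintro ⟨v, hv, hvle⟩
      rw [Set.mem_setOf_eq, hmemtake _ _ (by omega)] at hv
      obtain ⟨t, ht, rfl⟩ := hv
      rw [hEpos t (by omega), hgetp, hEp, vec_le_add_iff] at hvle
      have := hab (j + t) (j + p) (by omega) (by omega) (by omega)
      omega
    · intro hw0
      refine ⟨E (p - 1), (hmemtake _ _ (by omega)).2 ⟨p - 1, by omega, rfl⟩, ?_⟩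
      rw [hEpos (p - 1) (by omega), hgetp, hEp, vec_le_add_iff]
      have hgap : a (j + (p - 1)) = a (j + (p - 1) + 1) + 1 :=
        gapA hI hcp hab hmg (j + (p - 1)) (by omega)
          (h2 (j + (p - 1)) (by omega) (by omega))
      have hq : j + (p - 1) + 1 = j + p := by omega
      rw [hq] at hgap
      have hmono := hab (j + (p - 1)) (j + p) (by omega) (by omega) (by omega)
      omega
  · -- second block : colon is (y)
    have hjpos : 1 ≤ j := by omega
    have ht'j : p - (m + 1 - j) < j := by omega
    set i0 := j - 1 - (p - (m + 1 - j)) with hi0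
    have hi0j : i0 < j := by omega
    have hEp : E p = ![a i0, b i0] := hEneg p (by omega)
    refine ⟨{1}, fun w => ?_⟩
    simp only [Set.mem_singleton_iff, exists_eq_left]
    constructor
    · rintro ⟨v, hv, hvle⟩
      rw [Set.mem_setOf_eq, hmemtake _ _ (by omega)] at hv
      obtain ⟨t, ht, rfl⟩ := hv
      have hidx : ∃ q, q ≤ m ∧ i0 < q ∧ E t = ![a q, b q] := by
        by_cases htb : t < m + 1 - j
        · exact ⟨j + t, by omega, by omega, hEpos t htb⟩
        · exact ⟨j - 1 - (t - (m + 1 - j)), by omega, by omega, hEneg t htb⟩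
      obtain ⟨q, hqm, hq0, hEt⟩ := hidx
      rw [hEt, hgetp, hEp, vec_le_add_iff] at hvle
      have := hab i0 q (by omega) hqm hq0
      omega
    · intro hw1
      have hgap : b (i0 + 1) = b i0 + 1 :=
        gapB hI hcp hab hmg i0 (by omega) (h1 i0 hi0j)
      have hmono := hab i0 (i0 + 1) (by omega) (by omega) (by omega)
      have hle : (![a (i0 + 1), b (i0 + 1)] : Mon 2) ≤ w + E p := by
        rw [hEp, vec_le_add_iff]
        omega
      rw [hgetp]
      rcases Nat.lt_or_ge (i0 + 1) j with hlt | hge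
      · -- i0 + 1 is in the second block
        refine ⟨E ((m + 1 - j) + (p - (m + 1 - j) - 1)),
          (hmemtake _ _ (by omega)).2 ⟨(m + 1 - j) + (p - (m + 1 - j) - 1), by omega, rfl⟩, ?_⟩
        have he : E ((m + 1 - j) + (p - (m + 1 - j) - 1)) = ![a (i0 + 1), b (i0 + 1)] := by
          rw [hEneg _ (by omega)]
          have harith : j - 1 - ((m + 1 - j) + (p - (m + 1 - j) - 1) - (m + 1 - j)) = i0 + 1 := by
            omega
          rw [harith]
        rw [he]
        exact hle
      · -- i0 + 1 = j : position 0 in the first block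
        have hij : i0 + 1 = j := by omega
        refine ⟨E 0, (hmemtake _ _ (by omega)).2 ⟨0, by omega, rfl⟩, ?_⟩
        have he : E 0 = ![a (i0 + 1), b (i0 + 1)] := by
          rw [hEpos 0 (by omega), Nat.add_zero, ← hij]
        rw [he]
        exact hle

end Main

lemma mon_eta (u : Mon 2) : u = ![u 0, u 1] := by
  funext k
  fin_cases k <;> rfl

lemma vec_eq_iff {x y x' y' : ℕ} : (![x, y] : Mon 2) = ![x', y'] ↔ x = x' ∧ y = y' := by
  constructor
  · intro h
    constructor
    · have := congrFun h 0
      simpa using this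
    · have := congrFun h 1
      simpa using this
  · rintro ⟨rfl, rfl⟩
    rfl

section MG

variable {I : Set (Mon 2)}

lemma mg_le {u v : Mon 2} (h0 : u 0 ≤ v 0) (h1 : u 1 ≤ v 1) : u ≤ v := by
  rw [mon_le_def, Fin.forall_fin_two]
  exact ⟨h0, h1⟩

lemma mg_cross {u v : Mon 2} (hu : u ∈ minGens I) (hv : v ∈ minGens I)
    (h : u 0 < v 0) : v 1 < u 1 := by
  by_contra hc
  push_neg at hc
  have := hv.2 u hu.1 (mg_le (by omega) hc)
  subst this
  omega

lemma mg_inj0 {u v : Mon 2} (hu : u ∈ minGens I) (hv : v ∈ minGens I)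
    (h : u 0 = v 0) : u = v := by
  rcases le_total (u 1) (v 1) with hle | hle
  · exact hv.2 u hu.1 (mg_le (by omega) hle)
  · exact (hu.2 v hv.1 (mg_le (by omega) hle)).symm

lemma minGens_finite (I : Set (Mon 2)) : (minGens I).Finite := by
  rcases Set.eq_empty_or_nonempty (minGens I) with h | ⟨u, hu⟩
  · rw [h]
    exact Set.finite_empty
  · have hsub : minGens I ⊆ (minGens I ∩ {v | v 0 ≤ u 0}) ∪ (minGens I ∩ {v | v 1 ≤ u 1}) := by
      intro v hv
      rcases le_or_gt (v 0) (u 0) with h | h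
      · exact Or.inl ⟨hv, h⟩
      · exact Or.inr ⟨hv, le_of_lt (mg_cross hu hv h)⟩
    refine Set.Finite.subset (Set.Finite.union ?_ ?_) hsub
    · refine Set.Finite.of_finite_image (f := fun v => v 0) ?_ ?_
      · refine Set.Finite.subset (Set.finite_Iic (u 0)) ?_
        rintro x ⟨v, hv, he⟩
        rw [Set.mem_Iic, ← he]
        exact hv.2
      · intro v1 hv1 v2 hv2 he
        exact mg_inj0 hv1.1 hv2.1 he
    · refine Set.Finite.of_finite_image (f := fun v => v 1) ?_ ?_
      · refine Set.Finite.subset (Set.finite_Iic (u 1)) ?_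
        rintro x ⟨v, hv, he⟩
        rw [Set.mem_Iic, ← he]
        exact hv.2
      · intro v1 hv1 v2 hv2 he
        have he' : v1 1 = v2 1 := he
        clear he
        rcases Nat.lt_trichotomy (v1 0) (v2 0) with h | h | h
        · have := mg_cross hv1.1 hv2.1 h
          omega
        · exact mg_inj0 hv1.1 hv2.1 h
        · have := mg_cross hv2.1 hv1.1 h
          omega

lemma getD_eq_my {l : List ℕ} {n : ℕ} (h : n < l.length) : l.getD n 0 = l[n] := by
  rw [List.getD_eq_getElem?_getD, List.getElem?_eq_getElem h]
  rfl

lemma exists_enum (hne : (minGens I).Nonempty) :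
    ∃ (m : ℕ) (a b : ℕ → ℕ),
      (∀ i k : ℕ, i ≤ m → k ≤ m → i < k → a k < a i ∧ b i < b k) ∧
      minGens I = {u | ∃ i ≤ m, u = ![a i, b i]} := by
  classical
  have hfin := minGens_finite I
  set G : Finset (Mon 2) := hfin.toFinset with hG
  have hGmem : ∀ u, u ∈ G ↔ u ∈ minGens I := fun u => Set.Finite.mem_toFinset hfin
  set X : Finset ℕ := G.image (fun u => u 0) with hX
  have hXmem : ∀ x, x ∈ X ↔ ∃ u ∈ minGens I, u 0 = x := by
    intro x
    rw [hX, Finset.mem_image]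
    constructor
    · rintro ⟨u, hu, rfl⟩
      exact ⟨u, (hGmem u).1 hu, rfl⟩
    · rintro ⟨u, hu, rfl⟩
      exact ⟨u, (hGmem u).2 hu, rfl⟩
  set xs : List ℕ := X.sort (· ≤ ·) with hxs
  set m : ℕ := X.card - 1 with hm
  have hXne : X.Nonempty := by
    obtain ⟨u, hu⟩ := hne
    exact ⟨u 0, (hXmem (u 0)).2 ⟨u, hu, rfl⟩⟩
  have hxlen : xs.length = m + 1 := by
    rw [hxs, Finset.length_sort, hm]
    have := Finset.card_pos.2 hXne
    omega
  have hsorted : xs.Pairwise (· < ·) := (Finset.sortedLT_sort X).pairwise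
  set a : ℕ → ℕ := fun i => xs.getD (m - i) 0 with ha
  have haget : ∀ i, i ≤ m → ∀ (h : m - i < xs.length), a i = xs[m - i] := by
    intro i hi h
    rw [ha]
    exact getD_eq_my h
  have hmemxs : ∀ y, y ∈ xs ↔ y ∈ X := by
    intro y
    rw [hxs]
    exact Finset.mem_sort _
  have haX : ∀ i ≤ m, a i ∈ X := by
    intro i hi
    have h : m - i < xs.length := by omega
    rw [haget i hi h]
    exact (hmemxs _).1 (List.getElem_mem h)
  have hanti : ∀ i k, i ≤ m → k ≤ m → i < k → a k < a i := by
    intro i k hi hk hik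
    have h1 : m - k < xs.length := by omega
    have h2 : m - i < xs.length := by omega
    rw [haget i hi h2, haget k hk h1]
    have := hsorted.rel_get_of_lt (a := ⟨m - k, h1⟩) (b := ⟨m - i, h2⟩)
      (by simp [Fin.mk_lt_mk]; omega)
    simpa using this
  -- pick the generator with given x-coordinate
  set φ : ℕ → Mon 2 := fun x =>
    if h : ∃ u ∈ minGens I, u 0 = x then h.choose else (fun _ => 0) with hφ
  have hφspec : ∀ x, (∃ u ∈ minGens I, u 0 = x) → φ x ∈ minGens I ∧ (φ x) 0 = x := by
    intro x hx
    rw [hφ]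
    simp only [dif_pos hx]
    exact ⟨hx.choose_spec.1, hx.choose_spec.2⟩
  set b : ℕ → ℕ := fun i => (φ (a i)) 1 with hb
  have hφa : ∀ i ≤ m, φ (a i) ∈ minGens I ∧ (φ (a i)) 0 = a i := by
    intro i hi
    exact hφspec (a i) ((hXmem (a i)).1 (haX i hi))
  have hvec : ∀ i ≤ m, φ (a i) = ![a i, b i] := by
    intro i hi
    obtain ⟨h1, h2⟩ := hφa i hi
    rw [mon_eta (φ (a i)), h2, hb]
  refine ⟨m, a, b, ?_, ?_⟩
  · intro i k hi hk hik
    refine ⟨hanti i k hi hk hik, ?_⟩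
    have hu := hφa i hi
    have hv := hφa k hk
    have : (φ (a k)) 0 < (φ (a i)) 0 := by
      rw [hu.2, hv.2]
      exact hanti i k hi hk hik
    have := mg_cross hv.1 hu.1 this
    rw [hb]
    exact this
  · ext u
    constructor
    · intro hu
      have hx : u 0 ∈ X := (hXmem (u 0)).2 ⟨u, hu, rfl⟩
      have : u 0 ∈ xs := (hmemxs _).2 hx
      rw [List.mem_iff_getElem] at this
      obtain ⟨t, ht, hts⟩ := this
      have htm : t ≤ m := by omega
      refine ⟨m - t, by omega, ?_⟩
      have hidx : m - (m - t) = t := by omega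
      have hat : a (m - t) = u 0 := by
        rw [haget (m - t) (by omega) (by omega)]
        simp only [hidx]
        exact hts
      have := hφa (m - t) (by omega)
      have heq : φ (a (m - t)) = u := mg_inj0 this.1 hu (by rw [this.2, hat])
      rw [← heq, hvec (m - t) (by omega)]
    · rintro ⟨i, hi, rfl⟩
      rw [← hvec i hi]
      exact (hφa i hi).1

end MG

section Valley

variable {I : Set (Mon 2)} (hI : IsMonomialIdeal I) (hcp : ComponentwisePolymatroidal I)
  {m : ℕ} {a b : ℕ → ℕ}
  (hab : ∀ i k : ℕ, i ≤ m → k ≤ m → i < k → a k < a i ∧ b i < b k)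
  (hmg : minGens I = {u | ∃ i ≤ m, u = ![a i, b i]})

include hI hcp hab hmg in
lemma no_asc_desc : ∀ i k : ℕ, i < m → k < m →
    a i + b i < a (i+1) + b (i+1) → a (k+1) + b (k+1) < a k + b k → i < k → False := by
  intro i k him hkm hasc hdesc hik
  classical
  set Dset := (Finset.range m).filter
    (fun p => i < p ∧ a (p+1) + b (p+1) < a p + b p) with hD
  have hkD : k ∈ Dset := by
    rw [hD, Finset.mem_filter, Finset.mem_range]
    exact ⟨hkm, hik, hdesc⟩
  have hDne : Dset.Nonempty := ⟨k, hkD⟩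
  set k' := Dset.min' hDne with hk'
  have hk'mem : k' ∈ Dset := Dset.min'_mem hDne
  rw [hD, Finset.mem_filter, Finset.mem_range] at hk'mem
  obtain ⟨hk'm, hik', hdesc'⟩ := hk'mem
  have hk'min : ∀ p ∈ Dset, k' ≤ p := fun p hp => Finset.min'_le Dset p hp
  set A := (Finset.range k').filter (fun p => a p + b p < a (p+1) + b (p+1)) with hA
  have hiA : i ∈ A := by
    rw [hA, Finset.mem_filter, Finset.mem_range]
    exact ⟨hik', hasc⟩
  have hAne : A.Nonempty := ⟨i, hiA⟩
  set i' := A.max' hAne with hi'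
  have hi'mem : i' ∈ A := A.max'_mem hAne
  rw [hA, Finset.mem_filter, Finset.mem_range] at hi'mem
  obtain ⟨hi'k', hasc'⟩ := hi'mem
  have hii' : i ≤ i' := A.le_max' i hiA
  have hplat : ∀ p, i' < p → p < k' → a p + b p = a (p+1) + b (p+1) := by
    intro p h1 h2
    have hnasc : ¬ (a p + b p < a (p+1) + b (p+1)) := by
      intro hc
      have hpA : p ∈ A := by
        rw [hA, Finset.mem_filter, Finset.mem_range]
        exact ⟨h2, hc⟩
      have := A.le_max' p hpA
      omega
    have hndesc : ¬ (a (p+1) + b (p+1) < a p + b p) := by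
      intro hc
      have hpD : p ∈ Dset := by
        rw [hD, Finset.mem_filter, Finset.mem_range]
        exact ⟨by omega, by omega, hc⟩
      have := hk'min p hpD
      omega
    omega
  exact no_peak hI hcp hab hmg i' k' (by omega) hk'm hasc' hplat hdesc'

include hI hcp hab hmg in
lemma exists_valley : ∃ j ≤ m, (∀ i : ℕ, i < j → a (i+1) + b (i+1) ≤ a i + b i) ∧
    (∀ i : ℕ, j ≤ i → i < m → a i + b i ≤ a (i+1) + b (i+1)) := by
  classical
  set F := (Finset.range m).filter (fun p => a (p+1) + b (p+1) < a p + b p) with hF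
  by_cases hne : F.Nonempty
  · set K := F.max' hne with hK
    have hKmem : K ∈ F := F.max'_mem hne
    rw [hF, Finset.mem_filter, Finset.mem_range] at hKmem
    obtain ⟨hKm, hKdesc⟩ := hKmem
    refine ⟨K + 1, by omega, ?_, ?_⟩
    · intro i hi
      by_contra hc
      push_neg at hc
      rcases Nat.lt_or_ge i K with h | h
      · exact no_asc_desc hI hcp hab hmg i K (by omega) hKm hc hKdesc h
      · have : i = K := by omega
        subst this
        omega
    · intro i h1 h2
      by_contra hc
      push_neg at hc
      have hiF : i ∈ F := by
        rw [hF, Finset.mem_filter, Finset.mem_range]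
        exact ⟨h2, hc⟩
      have := F.le_max' i hiF
      omega
  · refine ⟨0, by omega, ?_, ?_⟩
    · intro i hi
      omega
    · intro i h1 h2
      by_contra hc
      push_neg at hc
      exact hne ⟨i, by rw [hF, Finset.mem_filter, Finset.mem_range]; exact ⟨h2, hc⟩⟩

end Valley

section Lists

variable {m j : ℕ} {a b : ℕ → ℕ}

lemma list_mem_iff (hj : j ≤ m) (u : Mon 2) :
    (u ∈ (((List.range (m + 1 - j)).map fun i => ![a (j + i), b (j + i)]) ++
         ((List.range j).map fun i => ![a (j - 1 - i), b (j - 1 - i)]))) ↔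
    ∃ i ≤ m, u = ![a i, b i] := by
  rw [List.mem_append]
  simp only [List.mem_map, List.mem_range]
  constructor
  · rintro (⟨t, ht, rfl⟩ | ⟨t, ht, rfl⟩)
    · exact ⟨j + t, by omega, rfl⟩
    · exact ⟨j - 1 - t, by omega, rfl⟩
  · rintro ⟨i, hi, rfl⟩
    rcases Nat.lt_or_ge i j with h | h
    · right
      refine ⟨j - 1 - i, by omega, ?_⟩
      have he : j - 1 - (j - 1 - i) = i := by omega
      rw [he]
    · left
      refine ⟨i - j, by omega, ?_⟩
      have he : j + (i - j) = i := by omega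
      rw [he]

lemma a_inj (hab : ∀ i k : ℕ, i ≤ m → k ≤ m → i < k → a k < a i ∧ b i < b k) :
    ∀ i k, i ≤ m → k ≤ m → a i = a k → i = k := by
  intro i k hi hk he
  rcases Nat.lt_trichotomy i k with h | h | h
  · have := hab i k hi hk h
    omega
  · exact h
  · have := hab k i hk hi h
    omega

lemma list_nodup (hj : j ≤ m)
    (hab : ∀ i k : ℕ, i ≤ m → k ≤ m → i < k → a k < a i ∧ b i < b k) :
    (((List.range (m + 1 - j)).map fun i => ![a (j + i), b (j + i)]) ++
     ((List.range j).map fun i => ![a (j - 1 - i), b (j - 1 - i)])).Nodup := by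
  rw [List.nodup_append]
  refine ⟨?_, ?_, ?_⟩
  · refine List.Nodup.map_on ?_ List.nodup_range
    intro x hx y hy hxy
    rw [List.mem_range] at hx hy
    have h0 := (vec_eq_iff.1 hxy).1
    have := a_inj hab (j + x) (j + y) (by omega) (by omega) h0
    omega
  · refine List.Nodup.map_on ?_ List.nodup_range
    intro x hx y hy hxy
    rw [List.mem_range] at hx hy
    have h0 := (vec_eq_iff.1 hxy).1
    have := a_inj hab (j - 1 - x) (j - 1 - y) (by omega) (by omega) h0
    omega
  · intro u hu1 v hu2
    simp only [List.mem_map, List.mem_range] at hu1 hu2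
    obtain ⟨t, ht, rfl⟩ := hu1
    obtain ⟨s, hs, rfl⟩ := hu2
    intro hsu
    have h0 := (vec_eq_iff.1 hsu.symm).1
    have := a_inj hab (j - 1 - s) (j + t) (by omega) (by omega) h0
    omega

end Lists

lemma admissible_nil {n : ℕ} : AdmissibleOrder ([] : List (Mon n)) :=
  fun i => Fin.elim0 i


/-- every componentwise polymatroidal ideal in `K[x,y]` has linear
quotients; explicitly, if `j` is a valley of the degree sequence, then
`u_j, u_{j+1}, ..., u_m, u_{j-1}, u_{j-2}, ..., u_0` is an admissible order. -/
theorem stmt_9 (I : Set (Mon 2)) (hI : IsMonomialIdeal I)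
    (hcp : ComponentwisePolymatroidal I) :
    HasLinearQuotients I ∧
    ∀ (m : ℕ) (a b : ℕ → ℕ),
      (∀ i k : ℕ, i ≤ m → k ≤ m → i < k → a k < a i ∧ b i < b k) →
      minGens I = {u | ∃ i ≤ m, u = ![a i, b i]} →
      ∀ j ≤ m,
        (∀ i : ℕ, i < j → a (i+1) + b (i+1) ≤ a i + b i) →
        (∀ i : ℕ, j ≤ i → i < m → a i + b i ≤ a (i+1) + b (i+1)) →
        AdmissibleOrder
          (((List.range (m + 1 - j)).map fun i => ![a (j + i), b (j + i)]) ++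
           ((List.range j).map fun i => ![a (j - 1 - i), b (j - 1 - i)])) := by
  have hpart2 : ∀ (m : ℕ) (a b : ℕ → ℕ),
      (∀ i k : ℕ, i ≤ m → k ≤ m → i < k → a k < a i ∧ b i < b k) →
      minGens I = {u | ∃ i ≤ m, u = ![a i, b i]} →
      ∀ j ≤ m,
        (∀ i : ℕ, i < j → a (i+1) + b (i+1) ≤ a i + b i) →
        (∀ i : ℕ, j ≤ i → i < m → a i + b i ≤ a (i+1) + b (i+1)) →
        AdmissibleOrder
          (((List.range (m + 1 - j)).map fun i => ![a (j + i), b (j + i)]) ++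
           ((List.range j).map fun i => ![a (j - 1 - i), b (j - 1 - i)])) := by
    intro m a b hab hmg j hj h1 h2
    exact admissible_main hI hcp hab hmg hj h1 h2
  refine ⟨?_, hpart2⟩
  rcases Set.eq_empty_or_nonempty (minGens I) with hemp | hne
  · exact ⟨[], List.nodup_nil, fun u => by simp [hemp], admissible_nil⟩
  · obtain ⟨m, a, b, hab, hmg⟩ := exists_enum hne
    obtain ⟨j, hj, h1, h2⟩ := exists_valley hI hcp hab hmg
    refine ⟨_, list_nodup hj hab, ?_, hpart2 m a b hab hmg j hj h1 h2⟩
    intro u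
    rw [list_mem_iff hj, hmg]
    exact Iff.rfl
end

section
/- The product of two yx-tight ideals in K[x,y] is again a yx-tight ideal. -/
/-!
A `yx`-tight ideal with corner generator `x^r y^j` has generators `x^{α i} y^i` (`i ≤ j`) and
`x^s y^{β s}` (`s ≤ r`) with `α`, `β` strictly decreasing, `α j = r` and `β r = j`; conversely such
data describe a `yx`-tight ideal. The minimal generators of `IJ` are sums of generators of `I` and
`J`. Sums within the first halves are dominated by `x^{α'' t} y^t`, where `α''` is the min-plus
convolution of `α` and `α'`, which is again strictly decreasing; likewise for the second halves with
`β''`. A mixed sum `x^{α i + s} y^{i + β' s}` is dominated by a point of one of these two halves,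
because `α''` and `β''` drop by at least one per step. So `IJ` is described by the data
`(j + j', r + r', α'', β'')`.
-/

open Set

lemma vec_two_le_vec_two {a b c d : ℕ} : (![a, b] : Mon 2) ≤ ![c, d] ↔ a ≤ c ∧ b ≤ d := by
  simp [Pi.le_def, Fin.forall_fin_two]

lemma exists_mem_minGens_le {n : ℕ} {I : Set (Mon n)} {w : Mon n} (hw : w ∈ I) :
    ∃ g ∈ minGens I, g ≤ w := by
  obtain ⟨g, hgw, hg, hmin⟩ := exists_minimal_le_of_wellFoundedLT (· ∈ I) w hw
  exact ⟨g, ⟨hg, fun v hv hvg => le_antisymm hvg (hmin hv hvg)⟩, hgw⟩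

lemma minGens_subset {n : ℕ} (I : Set (Mon n)) : minGens I ⊆ I := fun _ hu => hu.1

lemma minGens_eq_of_isAntichain {n : ℕ} {I S : Set (Mon n)} (hSI : S ⊆ I)
    (hcover : ∀ w ∈ I, ∃ g ∈ S, g ≤ w) (hS : IsAntichain (· ≤ ·) S) : minGens I = S := by
  ext u
  refine ⟨fun ⟨hu, hmin⟩ => ?_, fun hu => ⟨hSI hu, fun v hv hvu => ?_⟩⟩
  · obtain ⟨g, hg, hgu⟩ := hcover u hu
    rwa [← hmin g (hSI hg) hgu]
  · obtain ⟨g, hg, hgv⟩ := hcover v hv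
    obtain rfl := hS.eq hg hu (hgv.trans hvu)
    exact le_antisymm hvu hgv

lemma mulIdeal_mono {n : ℕ} {I I' J J' : Set (Mon n)} (hI : I ⊆ I') (hJ : J ⊆ J') :
    mulIdeal I J ⊆ mulIdeal I' J' := by
  rintro w ⟨u, hu, v, hv, rfl⟩
  exact ⟨u, hI hu, v, hJ hv, rfl⟩

lemma StrictAntiOn.apply_add_add_le {f : ℕ → ℕ} {n : ℕ} (hf : StrictAntiOn f (Iic n))
    {i d : ℕ} (h : i + d ≤ n) : f (i + d) + d ≤ f i := by
  induction d with
  | zero => simp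
  | succ d ih =>
    have hstep := hf (show i + d ∈ Iic n by simp; omega) (show i + (d + 1) ∈ Iic n from h)
      (by omega)
    have := ih (by omega)
    omega

/-- Min-plus convolution of `f` on `[0, p]` with `g` on `[0, q]`; it is `0` (empty `sInf`) when
`t > p + q`. -/
noncomputable def minPlusConv (f g : ℕ → ℕ) (p q t : ℕ) : ℕ :=
  sInf {x | ∃ i ≤ p, ∃ k ≤ q, i + k = t ∧ f i + g k = x}

section minPlusConv

variable {f g : ℕ → ℕ} {p q : ℕ}

lemma minPlusConv_le {i k : ℕ} (hi : i ≤ p) (hk : k ≤ q) :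
    minPlusConv f g p q (i + k) ≤ f i + g k :=
  Nat.sInf_le ⟨i, hi, k, hk, rfl, rfl⟩

lemma exists_eq_minPlusConv {t : ℕ} (ht : t ≤ p + q) :
    ∃ i ≤ p, ∃ k ≤ q, i + k = t ∧ f i + g k = minPlusConv f g p q t :=
  Nat.sInf_mem (s := {x | ∃ i ≤ p, ∃ k ≤ q, i + k = t ∧ f i + g k = x})
    ⟨_, min p t, min_le_left _ _, t - min p t, by omega, by omega, rfl⟩

lemma minPlusConv_comm : minPlusConv f g p q = minPlusConv g f q p := by
  funext t
  unfold minPlusConv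
  congr 1
  ext x
  constructor <;>
    exact fun ⟨i, hi, k, hk, hik, hx⟩ => ⟨k, hk, i, hi, by omega, by omega⟩

lemma minPlusConv_add : minPlusConv f g p q (p + q) = f p + g q := by
  obtain ⟨i, hi, k, hk, hik, h⟩ := exists_eq_minPlusConv (f := f) (g := g) (le_refl (p + q))
  obtain rfl : i = p := by omega
  obtain rfl : k = q := by omega
  exact h.symm

lemma minPlusConv_strictAntiOn (hf : StrictAntiOn f (Iic p)) (hg : StrictAntiOn g (Iic q)) :
    StrictAntiOn (minPlusConv f g p q) (Iic (p + q)) := by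
  refine strictAntiOn_Iic_of_succ_lt fun t ht => ?_
  obtain ⟨i, hi, k, hk, rfl, h⟩ := exists_eq_minPlusConv (f := f) (g := g) ht.le
  rw [Order.succ_eq_add_one, ← h]
  rcases hi.lt_or_eq with hi | rfl
  · calc minPlusConv f g p q (i + k + 1)
        = minPlusConv f g p q ((i + 1) + k) := by rw [add_right_comm]
      _ ≤ f (i + 1) + g k := minPlusConv_le hi hk
      _ < f i + g k := by
        gcongr
        exact hf (show i ∈ Iic p from hi.le) (show i + 1 ∈ Iic p from hi) (by omega)
  · have hk : k < q := by omega
    calc minPlusConv f g i q (i + k + 1)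
        = minPlusConv f g i q (i + (k + 1)) := by rw [add_assoc]
      _ ≤ f i + g (k + 1) := minPlusConv_le le_rfl hk
      _ < f i + g k := by
        gcongr
        exact hg (show k ∈ Iic q from hk.le) (show k + 1 ∈ Iic q from hk) (by omega)

end minPlusConv

/-- The generators `x^{α i} y^i` (`i ≤ j`) and `x^s y^{β s}` (`s ≤ r`) of a `yx`-tight ideal
whose corner generator is `x^r y^j`. -/
def tightStair (j r : ℕ) (α β : ℕ → ℕ) : Set (Mon 2) :=
  {u | ∃ i ≤ j, u = ![α i, i]} ∪ {u | ∃ s ≤ r, u = ![s, β s]}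

structure IsTightStair (j r : ℕ) (α β : ℕ → ℕ) : Prop where
  strictAntiOn_left : StrictAntiOn α (Iic j)
  strictAntiOn_right : StrictAntiOn β (Iic r)
  left_corner : α j = r
  right_corner : β r = j

namespace IsTightStair

variable {j r j' r' : ℕ} {α β α' β' : ℕ → ℕ}

lemma le_left (h : IsTightStair j r α β) {i : ℕ} (hi : i ≤ j) : r + (j - i) ≤ α i := by
  have := h.strictAntiOn_left.apply_add_add_le (i := i) (d := j - i) (by omega)
  rw [Nat.add_sub_cancel' hi, h.left_corner] at this
  omega

lemma le_right (h : IsTightStair j r α β) {s : ℕ} (hs : s ≤ r) : j + (r - s) ≤ β s := by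
  have := h.strictAntiOn_right.apply_add_add_le (i := s) (d := r - s) (by omega)
  rw [Nat.add_sub_cancel' hs, h.right_corner] at this
  omega

lemma isAntichain (h : IsTightStair j r α β) : IsAntichain (· ≤ ·) (tightStair j r α β) := by
  rintro u (⟨i, hi, rfl⟩ | ⟨s, hs, rfl⟩) v (⟨i', hi', rfl⟩ | ⟨s', hs', rfl⟩) hne hle <;>
    rw [vec_two_le_vec_two] at hle <;> apply hne
  · rw [h.strictAntiOn_left.le_iff_ge hi hi'] at hle
    rw [le_antisymm hle.2 hle.1]
  · have := h.le_left hi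
    obtain rfl : i = j := by omega
    obtain rfl : s' = r := by omega
    rw [h.left_corner, h.right_corner]
  · have := h.le_right hs
    obtain rfl : i' = j := by omega
    obtain rfl : s = r := by omega
    rw [h.left_corner, h.right_corner]
  · rw [h.strictAntiOn_right.le_iff_ge hs hs'] at hle
    rw [le_antisymm hle.1 hle.2]

lemma minPlusConv_minPlusConv (hI : IsTightStair j r α β) (hJ : IsTightStair j' r' α' β') :
    IsTightStair (j + j') (r + r') (minPlusConv α α' j j') (minPlusConv β β' r r') where
  strictAntiOn_left := minPlusConv_strictAntiOn hI.strictAntiOn_left hJ.strictAntiOn_left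
  strictAntiOn_right := minPlusConv_strictAntiOn hI.strictAntiOn_right hJ.strictAntiOn_right
  left_corner := by rw [minPlusConv_add, hI.left_corner, hJ.left_corner]
  right_corner := by rw [minPlusConv_add, hI.right_corner, hJ.right_corner]

end IsTightStair

lemma tightStair_congr {j r : ℕ} {α β α' β' : ℕ → ℕ} (hα : EqOn α α' (Iic j))
    (hβ : EqOn β β' (Iic r)) : tightStair j r α β = tightStair j r α' β' := by
  ext u
  simp only [tightStair, mem_union, mem_ofPred_eq]
  refine or_congr ?_ ?_ <;> refine exists_congr fun i => and_congr_right fun hi => ?_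
  · rw [hα (mem_Iic.2 hi)]
  · rw [hβ (mem_Iic.2 hi)]

lemma setOf_eq_tightStair {m j : ℕ} {a b : ℕ → ℕ} (hj : j ≤ m) (hb : ∀ i ≤ j, b i = i)
    (ha : ∀ i, j ≤ i → i ≤ m → a i = m - i) :
    {u : Mon 2 | ∃ i ≤ m, u = ![a i, b i]} = tightStair j (m - j) a (fun s => b (m - s)) := by
  ext u
  constructor
  · rintro ⟨i, hi, rfl⟩
    rcases le_total i j with hij | hji
    · exact Or.inl ⟨i, hij, by rw [hb i hij]⟩
    · exact Or.inr ⟨m - i, by omega, by rw [ha i hji hi]; simp [Nat.sub_sub_self hi]⟩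
  · rintro (⟨i, hi, rfl⟩ | ⟨s, hs, rfl⟩)
    · exact ⟨i, by omega, by rw [hb i hi]⟩
    · exact ⟨m - s, by omega, by rw [ha (m - s) (by omega) (by omega), Nat.sub_sub_self (by omega)]⟩

lemma yxTight.exists_tightStair {I : Set (Mon 2)} (h : yxTight I) :
    ∃ j r α β, IsTightStair j r α β ∧ minGens I = tightStair j r α β := by
  obtain ⟨m, a, b, ⟨hmono, -, -, hG⟩, j, hjm, hb, ha⟩ := h
  have ha' : ∀ i, j ≤ i → i ≤ m → a i = m - i := fun i hji him => by
    simpa [Nat.sub_sub_self him] using ha (m - i) (by omega)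
  refine ⟨j, m - j, a, fun s => b (m - s), ⟨?_, ?_, ?_, ?_⟩,
    hG.trans (setOf_eq_tightStair hjm hb ha')⟩
  · intro i hi k hk hik
    exact (hmono i k (le_trans hi hjm) (le_trans hk hjm) hik).1
  · intro s hs s' hs' hss'
    simp only [mem_Iic] at hs hs'
    exact (hmono (m - s') (m - s) (by omega) (by omega) (by omega)).2
  · exact ha' j le_rfl hjm
  · simp [Nat.sub_sub_self hjm, hb j le_rfl]

/-- `![stairFst j r α i, stairSnd j r β i]` for `i ≤ j + r` lists `tightStair j r α β` by
increasing `y`-exponent. -/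
def stairFst (j r : ℕ) (α : ℕ → ℕ) (i : ℕ) : ℕ := if i < j then α i else j + r - i

def stairSnd (j r : ℕ) (β : ℕ → ℕ) (i : ℕ) : ℕ := if i < j then i else β (j + r - i)

lemma stairFst_of_le {j r i : ℕ} {α : ℕ → ℕ} (hi : j ≤ i) : stairFst j r α i = j + r - i :=
  if_neg (by omega)

lemma stairSnd_of_le {j r i : ℕ} {β : ℕ → ℕ} (hi : j ≤ i) : stairSnd j r β i = β (j + r - i) :=
  if_neg (by omega)

namespace IsTightStair

variable {j r : ℕ} {α β : ℕ → ℕ}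

lemma stairSnd_eq_self (h : IsTightStair j r α β) {i : ℕ} (hi : i ≤ j) :
    stairSnd j r β i = i := by
  rcases hi.lt_or_eq with hi | rfl
  · exact if_pos hi
  · rw [stairSnd_of_le le_rfl, Nat.add_sub_cancel_left, h.right_corner]

lemma strictAntiOn_stairFst (h : IsTightStair j r α β) :
    StrictAntiOn (stairFst j r α) (Iic (j + r)) := by
  have hge : ∀ i, j + r - i ≤ stairFst j r α i := fun i => by
    by_cases hij : i < j
    · have := h.le_left hij.le
      rw [stairFst, if_pos hij]
      omega
    · rw [stairFst_of_le (by omega)]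
  intro i hi k hk hik
  by_cases hkj : k < j
  · rw [stairFst, stairFst, if_pos hkj, if_pos (by omega)]
    exact h.strictAntiOn_left (show i ≤ j by omega) (show k ≤ j by omega) hik
  · have := hge i
    rw [stairFst_of_le (by omega)]
    simp only [mem_Iic] at hk
    omega

lemma strictMonoOn_stairSnd (h : IsTightStair j r α β) :
    StrictMonoOn (stairSnd j r β) (Iic (j + r)) := by
  have hge : ∀ i ≤ j + r, i ≤ stairSnd j r β i := fun i hi => by
    by_cases hij : i < j
    · rw [h.stairSnd_eq_self hij.le]
    · have := h.le_right (s := j + r - i) (by omega)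
      rw [stairSnd_of_le (by omega)]
      omega
  intro i hi k hk hik
  simp only [mem_Iic] at hi hk
  by_cases hij : j ≤ i
  · rw [stairSnd_of_le hij, stairSnd_of_le (by omega)]
    exact h.strictAntiOn_right (show j + r - k ≤ r by omega) (show j + r - i ≤ r by omega)
      (by omega)
  · have := hge k hk
    rw [h.stairSnd_eq_self (by omega)]
    omega

lemma tightStair_eq (h : IsTightStair j r α β) :
    tightStair j r α β =
      tightStair j (j + r - j) (stairFst j r α) (fun s => stairSnd j r β (j + r - s)) := by
  rw [Nat.add_sub_cancel_left]
  refine tightStair_congr (fun i hi => ?_) (fun s hs => ?_)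
  · rcases (mem_Iic.1 hi).lt_or_eq with hi | rfl
    · exact (if_pos hi).symm
    · rw [stairFst_of_le le_rfl, h.left_corner]
      omega
  · rw [mem_Iic] at hs
    rw [stairSnd_of_le (by omega), Nat.sub_sub_self (by omega)]

lemma yxTight {I : Set (Mon 2)} (h : IsTightStair j r α β)
    (hG : minGens I = tightStair j r α β) : yxTight I := by
  have hgens : minGens I = {u | ∃ i ≤ j + r, u = ![stairFst j r α i, stairSnd j r β i]} := by
    rw [hG, h.tightStair_eq, setOf_eq_tightStair (by omega) (fun i => h.stairSnd_eq_self)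
      (fun i hi _ => stairFst_of_le hi)]
  refine ⟨j + r, stairFst j r α, stairSnd j r β, ⟨fun i k hi hk hik =>
    ⟨h.strictAntiOn_stairFst hi hk hik, h.strictMonoOn_stairSnd hi hk hik⟩, ?_,
      h.stairSnd_eq_self (Nat.zero_le j), hgens⟩,
    j, by omega, fun i => h.stairSnd_eq_self, fun i hi => ?_⟩ <;>
  · rw [stairFst_of_le (by omega)]
    omega

end IsTightStair

section product

variable {j r j' r' : ℕ} {α β α' β' : ℕ → ℕ}

lemma tightStair_minPlusConv_subset_mulIdeal :
    tightStair (j + j') (r + r') (minPlusConv α α' j j') (minPlusConv β β' r r') ⊆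
      mulIdeal (tightStair j r α β) (tightStair j' r' α' β') := by
  rintro u (⟨t, ht, rfl⟩ | ⟨t, ht, rfl⟩)
  · obtain ⟨i, hi, k, hk, rfl, h⟩ := exists_eq_minPlusConv (f := α) (g := α') ht
    exact ⟨_, Or.inl ⟨i, hi, rfl⟩, _, Or.inl ⟨k, hk, rfl⟩, by simp [← h]⟩
  · obtain ⟨s, hs, s', hs', rfl, h⟩ := exists_eq_minPlusConv (f := β) (g := β') ht
    exact ⟨_, Or.inr ⟨s, hs, rfl⟩, _, Or.inr ⟨s', hs', rfl⟩, by simp [← h]⟩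

lemma IsTightStair.exists_le_add_of_left_of_right (hI : IsTightStair j r α β)
    (hJ : IsTightStair j' r' α' β') {i s : ℕ} (hi : i ≤ j) (hs : s ≤ r') :
    ∃ g ∈ tightStair (j + j') (r + r') (minPlusConv α α' j j') (minPlusConv β β' r r'),
      g ≤ ![α i + s, i + β' s] := by
  have hK := hI.minPlusConv_minPlusConv hJ
  have hαi := hI.le_left hi
  have hβs := hJ.le_right hs
  by_cases hd : s + (j - i) ≤ r'
  · refine ⟨_, Or.inr ⟨r + s + (j - i), by omega, rfl⟩, ?_⟩
    have h1 := hK.strictAntiOn_right.apply_add_add_le (i := r + s) (d := j - i) (by omega)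
    have h2 := minPlusConv_le (f := β) (g := β') (le_refl r) hs
    rw [hI.right_corner] at h2
    rw [vec_two_le_vec_two]
    omega
  · refine ⟨_, Or.inl ⟨i + j' + (r' - s), by omega, rfl⟩, ?_⟩
    have h1 := hK.strictAntiOn_left.apply_add_add_le (i := i + j') (d := r' - s) (by omega)
    have h2 := minPlusConv_le (f := α) (g := α') hi (le_refl j')
    rw [hJ.left_corner] at h2
    rw [vec_two_le_vec_two]
    omega

lemma IsTightStair.exists_le_add (hI : IsTightStair j r α β) (hJ : IsTightStair j' r' α' β')
    {u v : Mon 2} (hu : u ∈ tightStair j r α β) (hv : v ∈ tightStair j' r' α' β') :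
    ∃ g ∈ tightStair (j + j') (r + r') (minPlusConv α α' j j') (minPlusConv β β' r r'),
      g ≤ u + v := by
  rcases hu with ⟨i, hi, rfl⟩ | ⟨s, hs, rfl⟩ <;> rcases hv with ⟨k, hk, rfl⟩ | ⟨s', hs', rfl⟩ <;>
    simp only [Matrix.cons_add_cons, Matrix.empty_add_empty]
  · exact ⟨_, Or.inl ⟨i + k, by omega, rfl⟩, vec_two_le_vec_two.2 ⟨minPlusConv_le hi hk, le_rfl⟩⟩
  · exact hI.exists_le_add_of_left_of_right hJ hi hs'
  · have := hJ.exists_le_add_of_left_of_right hI hk hs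
    rwa [add_comm j', add_comm r', minPlusConv_comm, minPlusConv_comm (f := β'), add_comm (α' k),
      add_comm k] at this
  · exact ⟨_, Or.inr ⟨s + s', by omega, rfl⟩, vec_two_le_vec_two.2 ⟨le_rfl, minPlusConv_le hs hs'⟩⟩

lemma minGens_mulIdeal_eq_tightStair {I J : Set (Mon 2)} (hI : IsTightStair j r α β)
    (hJ : IsTightStair j' r' α' β') (hGI : minGens I = tightStair j r α β)
    (hGJ : minGens J = tightStair j' r' α' β') :
    minGens (mulIdeal I J) =
      tightStair (j + j') (r + r') (minPlusConv α α' j j') (minPlusConv β β' r r') := by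
  refine minGens_eq_of_isAntichain ?_ ?_ (hI.minPlusConv_minPlusConv hJ).isAntichain
  · exact tightStair_minPlusConv_subset_mulIdeal.trans
      (mulIdeal_mono (hGI ▸ minGens_subset I) (hGJ ▸ minGens_subset J))
  · rintro w ⟨u, hu, v, hv, rfl⟩
    obtain ⟨g₁, hg₁, hgu⟩ := exists_mem_minGens_le hu
    obtain ⟨g₂, hg₂, hgv⟩ := exists_mem_minGens_le hv
    rw [hGI] at hg₁
    rw [hGJ] at hg₂
    obtain ⟨g, hg, hle⟩ := hI.exists_le_add hJ hg₁ hg₂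
    exact ⟨g, hg, hle.trans (add_le_add hgu hgv)⟩

end product

theorem stmt_11_general (I J : Set (Mon 2))
    (hxI : yxTight I) (hxJ : yxTight J) :
    yxTight (mulIdeal I J) := by
  obtain ⟨j, r, α, β, hI, hGI⟩ := hxI.exists_tightStair
  obtain ⟨j', r', α', β', hJ, hGJ⟩ := hxJ.exists_tightStair
  exact (hI.minPlusConv_minPlusConv hJ).yxTight (minGens_mulIdeal_eq_tightStair hI hJ hGI hGJ)

/-- the product of two `yx`-tight ideals in `K[x,y]` is `yx`-tight. -/
theorem stmt_11 (I J : Set (Mon 2)) (hI : IsMonomialIdeal I) (hJ : IsMonomialIdeal J)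
    (hxI : yxTight I) (hxJ : yxTight J) :
    yxTight (mulIdeal I J) :=
  stmt_11_general I J hxI hxJ
end

section
/- If I and J are componentwise polymatroidal monomial ideals in K[x,y], then the product IJ is also componentwise polymatroidal. In particular, every power of a componentwise polymatroidal ideal in K[x,y] is componentwise polymatroidal. -/
/-!
In two variables a monomial of given degree is determined by its `x_i`-exponent, and the
exchange `exch u i j` lowers that exponent by one. Hence `K` is componentwise polymatroidal
iff, in every degree, the `x_i`-exponents of the monomials of `K` form an interval.

For the product, write `u = p + q`, `v = r + s` of the same degree with `v_i < u_i`, and by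
symmetry `deg p ≤ deg r`. If `s_i < q_i`, exchange inside `J` (after raising `s` to the degree
of `q`). Otherwise `r_i < p_i`, and the interval property of `I` in degree `deg r`, between `r`
and `p` raised to degree `deg r`, provides the `I`-factor of `exch u i j` over `s`.
-/

section General

variable {n : ℕ}

lemma degree_add (u v : Mon n) : degree (u + v) = degree u + degree v :=
  Finset.sum_add_distrib

lemma eq_of_le_of_degree_eq {u v : Mon n} (h : u ≤ v) (hd : degree u = degree v) : u = v :=
  funext fun i => (Finset.sum_eq_sum_iff_of_le fun i _ => h i).1 hd i (Finset.mem_univ i)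

lemma IsMonomialIdeal.mem_of_le {K : Set (Mon n)} (hK : IsMonomialIdeal K) {u w : Mon n}
    (hu : u ∈ K) (h : u ≤ w) : w ∈ K := by
  simpa [add_tsub_cancel_of_le h] using hK u hu (w - u)

lemma IsMonomialIdeal.component_subset {K : Set (Mon n)} (hK : IsMonomialIdeal K) (d : ℕ) :
    component K d ⊆ K := by
  rintro w ⟨u, hu, -, huw⟩
  exact hK.mem_of_le hu huw

lemma mem_minGens_component {K : Set (Mon n)} {d : ℕ} {u : Mon n} :
    u ∈ minGens (component K d) ↔ u ∈ K ∧ degree u = d := by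
  constructor
  · rintro ⟨⟨u', hu', hd, hle⟩, hmin⟩
    obtain rfl := hmin u' ⟨u', hu', hd, le_rfl⟩ hle
    exact ⟨hu', hd⟩
  · rintro ⟨hu, rfl⟩
    refine ⟨⟨u, hu, rfl, le_rfl⟩, ?_⟩
    rintro v ⟨w, -, hwd, hwv⟩ hvu
    obtain rfl := eq_of_le_of_degree_eq (hwv.trans hvu) hwd
    exact le_antisymm hvu hwv

lemma mulIdeal_comm (I J : Set (Mon n)) : mulIdeal I J = mulIdeal J I := by
  ext w
  constructor <;>
  · rintro ⟨u, hu, v, hv, rfl⟩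
    exact ⟨v, hv, u, hu, add_comm u v⟩

lemma IsMonomialIdeal.mulIdeal {I : Set (Mon n)} (J : Set (Mon n)) (hI : IsMonomialIdeal I) :
    IsMonomialIdeal (mulIdeal I J) := by
  rintro _ ⟨u, hu, v, hv, rfl⟩ w
  exact ⟨u + w, hI u hu w, v, hv, add_right_comm u v w⟩

lemma univ_mulIdeal {I : Set (Mon n)} (hI : IsMonomialIdeal I) : mulIdeal Set.univ I = I := by
  ext w
  constructor
  · rintro ⟨u, -, v, hv, rfl⟩
    simpa [add_comm] using hI v hv u
  · exact fun hw => ⟨0, trivial, w, hw, (zero_add w).symm⟩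

lemma isMonomialIdeal_powIdeal {I : Set (Mon n)} (hI : IsMonomialIdeal I) :
    ∀ k, IsMonomialIdeal (powIdeal I k)
  | 0 => fun _ _ _ => trivial
  | k + 1 => by
    rw [powIdeal, mulIdeal_comm]
    exact hI.mulIdeal _

lemma exch_add_left {p q : Mon n} {i j : Fin n} (hij : i ≠ j) (hq : 1 ≤ q i) :
    exch (p + q) i j = p + exch q i j := by
  funext k
  simp only [exch, Pi.add_apply]
  split_ifs with hki <;> [subst hki; skip; skip] <;> omega

end General

section TwoVariables

variable {i j : Fin 2}

lemma Fin.two_eq_or_eq (hij : i ≠ j) (k : Fin 2) : k = i ∨ k = j := by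
  fin_cases i <;> fin_cases j <;> fin_cases k <;> simp_all

lemma Fin.two_exists_ne (i : Fin 2) : ∃ j, i ≠ j := by
  fin_cases i
  exacts [⟨1, by decide⟩, ⟨0, by decide⟩]

lemma degree_eq_add (hij : i ≠ j) (u : Mon 2) : degree u = u i + u j := by
  fin_cases i <;> fin_cases j <;> simp_all [degree, Fin.sum_univ_two, add_comm]

lemma eq_of_apply_eq_of_degree_eq (hij : i ≠ j) {u v : Mon 2} (hi : u i = v i)
    (hd : degree u = degree v) : u = v := by
  have hj : u j = v j := by
    have := degree_eq_add hij u
    have := degree_eq_add hij v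
    omega
  funext k
  rcases Fin.two_eq_or_eq hij k with rfl | rfl <;> assumption

lemma exch_apply_left (u : Mon 2) : exch u i j i = u i - 1 := by
  simp [exch]

lemma exch_apply_right (hij : i ≠ j) (u : Mon 2) : exch u i j j = u j + 1 := by
  simp [exch, hij.symm]

lemma degree_exch (hij : i ≠ j) {u : Mon 2} (hu : 1 ≤ u i) : degree (exch u i j) = degree u := by
  rw [degree_eq_add hij, degree_eq_add hij u, exch_apply_left, exch_apply_right hij]
  omega

lemma IsMonomialIdeal.exists_degree_eq {K : Set (Mon 2)} (hK : IsMonomialIdeal K) (hij : i ≠ j)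
    {v : Mon 2} (hv : v ∈ K) {d : ℕ} (hd : degree v ≤ d) :
    ∃ v' ∈ K, degree v' = d ∧ v' i = v i := by
  set v' := Function.update v j (v j + (d - degree v))
  have hle : v ≤ v' := by
    intro k
    rcases Fin.two_eq_or_eq hij k with rfl | rfl <;> simp [v', hij]
  refine ⟨v', hK.mem_of_le hv hle, ?_, by simp [v', hij]⟩
  have := degree_eq_add hij v
  rw [degree_eq_add hij]
  simp only [v', Function.update_self, Function.update_of_ne hij]
  omega

lemma componentwisePolymatroidal_of_exch_mem {K : Set (Mon 2)}
    (h : ∀ u ∈ K, ∀ v ∈ K, degree u = degree v → ∀ i j : Fin 2, i ≠ j → v i < u i →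
      exch u i j ∈ K) :
    ComponentwisePolymatroidal K := by
  intro d
  refine ⟨⟨d, fun u hu => (mem_minGens_component.1 hu).2⟩, ?_⟩
  intro u hu v hv i hvu
  obtain ⟨huK, rfl⟩ := mem_minGens_component.1 hu
  obtain ⟨hvK, hd⟩ := mem_minGens_component.1 hv
  obtain ⟨j, hij⟩ := Fin.two_exists_ne i
  have := degree_eq_add hij u
  have := degree_eq_add hij v
  exact ⟨j, by omega, _, h u huK v hvK hd.symm i j hij hvu, degree_exch hij (by omega), le_rfl⟩

variable {K : Set (Mon 2)} (hK : IsMonomialIdeal K) (hcp : ComponentwisePolymatroidal K)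
include hK hcp

lemma ComponentwisePolymatroidal.exch_mem (hij : i ≠ j) {u v : Mon 2} (hu : u ∈ K)
    (hv : v ∈ K) (hd : degree v ≤ degree u) (hvu : v i < u i) : exch u i j ∈ K := by
  obtain ⟨v', hv', hd', hi'⟩ := hK.exists_degree_eq hij hv hd
  have hu' := mem_minGens_component.2 ⟨hu, rfl⟩
  have hv'' := mem_minGens_component.2 ⟨hv', hd'⟩
  obtain ⟨k, hk, hmem⟩ := (hcp (degree u)).2 u hu' v' hv'' i (hi' ▸ hvu)
  rcases Fin.two_eq_or_eq hij k with rfl | rfl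
  · exact absurd hk (by omega)
  · exact hK.component_subset _ hmem

lemma ComponentwisePolymatroidal.mem_of_apply_mem_Icc (hij : i ≠ j) {a b w : Mon 2}
    (ha : a ∈ K) (hb : b ∈ K) (hab : degree a = degree b) (hw : degree w = degree b)
    (haw : a i ≤ w i) (hwb : w i ≤ b i) : w ∈ K := by
  induction hn : b i - w i generalizing b with
  | zero => rwa [eq_of_apply_eq_of_degree_eq hij (by omega) hw]
  | succ n ih =>
    have hb1 : 1 ≤ b i := by omega
    refine ih (hcp.exch_mem hK hij hb ha hab.le (by omega)) ?_ ?_ ?_ ?_ <;>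
      simp only [degree_exch hij hb1, exch_apply_left] <;> omega

end TwoVariables

section Product

variable {I J : Set (Mon 2)} (hI : IsMonomialIdeal I) (hJ : IsMonomialIdeal J)
  (hcpI : ComponentwisePolymatroidal I) (hcpJ : ComponentwisePolymatroidal J)
include hI hJ hcpI hcpJ

lemma exch_mem_mulIdeal_of_degree_le {i j : Fin 2} (hij : i ≠ j) {p q r s : Mon 2}
    (hp : p ∈ I) (hq : q ∈ J) (hr : r ∈ I) (hs : s ∈ J) (hpr : degree p ≤ degree r)
    (hd : degree (p + q) = degree (r + s)) (hlt : r i + s i < p i + q i) :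
    exch (p + q) i j ∈ mulIdeal I J := by
  rw [degree_add, degree_add] at hd
  have hpi := degree_eq_add hij p
  have hqi := degree_eq_add hij q
  have hri := degree_eq_add hij r
  have hsi := degree_eq_add hij s
  by_cases hsq : s i < q i
  · rw [exch_add_left hij (by omega)]
    exact ⟨p, hp, _, hcpJ.exch_mem hJ hij hq hs (by omega) hsq, rfl⟩
  · set u' := exch (p + q) i j
    have hu'i : u' i = p i + q i - 1 := exch_apply_left _
    have hu'j : u' j = p j + q j + 1 := exch_apply_right hij _
    have hu'd : degree u' = degree p + degree q := by
      rw [degree_exch hij (by simp; omega), degree_add]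
    -- the `show` states the goal with `ℕ`'s own order, which `omega` recognises
    have hsu' : s ≤ u' := fun k : Fin 2 => show s k ≤ u' k by
      rcases Fin.two_eq_or_eq hij k with rfl | rfl
      · rw [hu'i]; omega
      · rw [hu'j]; omega
    obtain ⟨p', hp', hp'd, hp'i⟩ := hI.exists_degree_eq hij hp hpr
    have hw : degree (u' - s) = degree r := by
      have := degree_add (u' - s) s
      rw [tsub_add_cancel_of_le hsu'] at this
      omega
    have hwI : u' - s ∈ I := by
      refine hcpI.mem_of_apply_mem_Icc hI hij hr hp' hp'd.symm (hw.trans hp'd.symm) ?_ ?_ <;>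
        simp only [Pi.sub_apply, hu'i, hp'i] <;> omega
    exact ⟨u' - s, hwI, s, hs, (tsub_add_cancel_of_le hsu').symm⟩

lemma exch_mem_mulIdeal {i j : Fin 2} (hij : i ≠ j) {u v : Mon 2} (hu : u ∈ mulIdeal I J)
    (hv : v ∈ mulIdeal I J) (hd : degree u = degree v) (hvu : v i < u i) :
    exch u i j ∈ mulIdeal I J := by
  obtain ⟨p, hp, q, hq, rfl⟩ := hu
  obtain ⟨r, hr, s, hs, rfl⟩ := hv
  rcases le_total (degree p) (degree r) with hpr | hrp
  · exact exch_mem_mulIdeal_of_degree_le hI hJ hcpI hcpJ hij hp hq hr hs hpr hd hvu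
  · have hqs : degree q ≤ degree s := by rw [degree_add, degree_add] at hd; omega
    rw [add_comm p, mulIdeal_comm]
    rw [add_comm p, add_comm r] at hd
    exact exch_mem_mulIdeal_of_degree_le hJ hI hcpJ hcpI hij hq hp hs hr hqs hd
      (by simp only [Pi.add_apply] at hvu; omega)

theorem ComponentwisePolymatroidal.mulIdeal : ComponentwisePolymatroidal (mulIdeal I J) :=
  componentwisePolymatroidal_of_exch_mem fun _ hu _ hv hd _ _ hij hvu =>
    exch_mem_mulIdeal hI hJ hcpI hcpJ hij hu hv hd hvu

end Product

/-- the product of two componentwise polymatroidal ideals in `K[x,y]` is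
componentwise polymatroidal; in particular all (positive) powers of a componentwise
polymatroidal ideal in `K[x,y]` are componentwise polymatroidal. -/
theorem stmt_12 (I J : Set (Mon 2)) (hI : IsMonomialIdeal I) (hJ : IsMonomialIdeal J)
    (hcpI : ComponentwisePolymatroidal I) (hcpJ : ComponentwisePolymatroidal J) :
    ComponentwisePolymatroidal (mulIdeal I J) ∧
    ∀ k : ℕ, 1 ≤ k → ComponentwisePolymatroidal (powIdeal I k) := by
  refine ⟨.mulIdeal hI hJ hcpI hcpJ, fun k hk => ?_⟩
  induction k, hk using Nat.le_induction with
  | base => rwa [powIdeal, powIdeal, univ_mulIdeal hI]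
  | succ k _ ih => exact .mulIdeal (isMonomialIdeal_powIdeal hI k) hI ih hcpI
end
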